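/- Adding a potential-based shaping reward r^sh(s, s') = ρΦ(s') − Φ(s) to an MDP's reward function changes the optimal action-value function by the constant −Φ(s) shift: Q̃*(s,a) = Q*(s,a) − Φ(s), and hence preserves the set of optimal policies. -/
import Mathlib

/-- Shifting a finitely-indexed family by a constant shifts its supremum. -/
lemma ciSup_sub_const' {ι : Type*} [Fintype ι] [Nonempty ι] (f : ι → ℝ) (c : ℝ) :
    (⨆ i, (f i - c)) = (⨆ i, f i) - c := by
  apply le_antisymm
  · exact ciSup_le fun i => sub_le_sub_right
      (le_ciSup (Set.Finite.bddAbove (Set.finite_range f)) i) c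
  · rw [sub_le_iff_le_add]
    refine ciSup_le fun i => ?_
    have := le_ciSup (Set.Finite.bddAbove (Set.finite_range (fun i => f i - c))) i
    linarith
/-- Sups of pointwise-close families are close. -/
lemma abs_ciSup_sub_ciSup_le {ι : Type*} [Fintype ι] [Nonempty ι] (f g : ι → ℝ) (M : ℝ)
    (h : ∀ i, |f i - g i| ≤ M) : |(⨆ i, f i) - (⨆ i, g i)| ≤ M := by
  rw [abs_sub_le_iff]
  constructor
  · rw [sub_le_iff_le_add]
    refine ciSup_le fun i => ?_
    have h1 := le_ciSup (Set.Finite.bddAbove (Set.finite_range g)) i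
    have h2 := abs_le.1 (h i)
    linarith [h2.2]
  · rw [sub_le_iff_le_add]
    refine ciSup_le fun i => ?_
    have h1 := le_ciSup (Set.Finite.bddAbove (Set.finite_range f)) i
    have h2 := abs_le.1 (h i)
    linarith [h2.1]

/-- Adding a potential-based shaping reward `r^sh(s,s') = ρΦ(s') − Φ(s)` to a finite
MDP's reward changes the optimal action-value function by the shift
`Q̃*(s,a) = Q*(s,a) − Φ(s)`, and hence preserves the set of optimal (greedy) policies. -/
theorem potential_based_reward_shaping {S 𝒜 : Type*} [Fintype S] [Fintype 𝒜]
    [Nonempty S] [Nonempty 𝒜]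
    (p : S → 𝒜 → S → ℝ) (hp0 : ∀ s a s', 0 ≤ p s a s') (hp1 : ∀ s a, ∑ s', p s a s' = 1)
    (R : S → 𝒜 → S → ℝ) (ρ : ℝ) (hρ0 : 0 ≤ ρ) (hρ1 : ρ < 1) (Φ : S → ℝ)
    (Qstar Qshaped : S → 𝒜 → ℝ)
    -- `Q*` is the optimal action-value function of the original MDP
    (hQ : ∀ s a, Qstar s a =
      ∑ s', p s a s' * (R s a s' + ρ * ⨆ a', Qstar s' a'))
    -- `Q̃*` is the optimal action-value function of the shaped MDP with reward
    -- `R'(s,a,s') = R(s,a,s') + ρΦ(s') − Φ(s)`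
    (hQt : ∀ s a, Qshaped s a =
      ∑ s', p s a s' * ((R s a s' + ρ * Φ s' - Φ s) + ρ * ⨆ a', Qshaped s' a')) :
    (∀ s a, Qshaped s a = Qstar s a - Φ s) ∧
    (∀ s : S, {a : 𝒜 | ∀ b, Qshaped s b ≤ Qshaped s a} =
      {a : 𝒜 | ∀ b, Qstar s b ≤ Qstar s a}) := by
  set D : S → 𝒜 → ℝ := fun s a => Qshaped s a - (Qstar s a - Φ s) with hD
  set e : S → ℝ := fun s' =>
    (⨆ a', Qshaped s' a') - ((⨆ a', Qstar s' a') - Φ s') with he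
  have hne : (Finset.univ : Finset (S × 𝒜)).Nonempty := Finset.univ_nonempty
  set M : ℝ := Finset.univ.sup' hne (fun sa : S × 𝒜 => |D sa.1 sa.2|) with hM
  have hDM : ∀ s a, |D s a| ≤ M := fun s a =>
    Finset.le_sup' (fun sa : S × 𝒜 => |D sa.1 sa.2|) (Finset.mem_univ (s, a))
  have heM : ∀ s', |e s'| ≤ M := by
    intro s'
    have hsub : ((⨆ a', Qstar s' a') - Φ s') = ⨆ a', (Qstar s' a' - Φ s') :=
      (ciSup_sub_const' (fun a' => Qstar s' a') (Φ s')).symm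
    rw [he]
    simp only [hsub]
    exact abs_ciSup_sub_ciSup_le _ _ M (fun a' => hDM s' a')
  have hkey : ∀ s a, D s a = ρ * ∑ s', p s a s' * e s' := by
    intro s a
    have h1 : Φ s = ∑ s', Φ s * p s a s' := by
      rw [← Finset.mul_sum, hp1, mul_one]
    calc D s a
        = (∑ s', p s a s' * ((R s a s' + ρ * Φ s' - Φ s) + ρ * ⨆ a', Qshaped s' a'))
          - (∑ s', p s a s' * (R s a s' + ρ * ⨆ a', Qstar s' a'))
          + ∑ s', Φ s * p s a s' := by
          simp only [hD]; rw [hQt s a, hQ s a, ← h1]; ring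
      _ = ∑ s', (p s a s' * ((R s a s' + ρ * Φ s' - Φ s) + ρ * ⨆ a', Qshaped s' a')
          - p s a s' * (R s a s' + ρ * ⨆ a', Qstar s' a') + Φ s * p s a s') := by
          rw [Finset.sum_add_distrib, Finset.sum_sub_distrib]
      _ = ρ * ∑ s', p s a s' * e s' := by
          rw [Finset.mul_sum]
          refine Finset.sum_congr rfl fun s' _ => ?_
          simp only [he]
          ring
  have hbound : ∀ s a, |D s a| ≤ ρ * M := by
    intro s a
    rw [hkey s a, abs_mul, abs_of_nonneg hρ0]
    refine mul_le_mul_of_nonneg_left ?_ hρ0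
    calc |∑ s', p s a s' * e s'| ≤ ∑ s', |p s a s' * e s'| := Finset.abs_sum_le_sum_abs _ _
      _ ≤ ∑ s', p s a s' * M := by
          refine Finset.sum_le_sum fun s' _ => ?_
          rw [abs_mul, abs_of_nonneg (hp0 s a s')]
          exact mul_le_mul_of_nonneg_left (heM s') (hp0 s a s')
      _ = M := by rw [← Finset.sum_mul, hp1, one_mul]
  have hMle : M ≤ ρ * M := by
    rw [hM]
    exact Finset.sup'_le _ _ fun sa _ => hbound sa.1 sa.2
  have hM0 : 0 ≤ M := le_trans (abs_nonneg _) (hDM Classical.ofNonempty Classical.ofNonempty)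
  have hMzero : M ≤ 0 := by nlinarith
  have hEq : ∀ s a, Qshaped s a = Qstar s a - Φ s := by
    intro s a
    have : |D s a| ≤ 0 := le_trans (hDM s a) hMzero
    have : D s a = 0 := abs_eq_zero.mp (le_antisymm this (abs_nonneg _))
    simp only [hD] at this
    linarith [this]
  refine ⟨hEq, fun s => ?_⟩
  ext a
  simp only [Set.mem_setOf_eq, hEq]
  constructor
  · intro h b; have := h b; linarith
  · intro h b; have := h b; linarith
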